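/- Let m0(x) = (1+x²/2)^{-2}. Then T(m0)(x) := (1/π)∫₀^∞ m0(y)·((y/x)·ln|(x+y)/(x−y)| − 2) dy = −(√2/2)·x²/(2+x²) for every x > 0. -/

import Mathlib

/-!
The integrand has the explicit antiderivative
`P(y) = 2(x+y)(y-x)(log(x+y) - log(y-x)) / (x(x²+2)(2+y²)) - √2x²/(x²+2) · arctan(y/√2)
  - 2y/(2+y²)`,
which is continuous on `[0, ∞)` because the factor `y - x` absorbs the logarithmic singularity
at `y = x`; moreover `P(0) = 0` and `P(y) → -√2x²/(x²+2) · π/2` as `y → ∞`. On `(0, x]`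
the integrand is integrable (its singularity is `log |x - y|`), so it integrates to
`P(x) - P(0)`. On `(x, ∞)` it is nonnegative, since `log ((1+t)/(1-t)) ≥ 2t` for
`t = x/y ∈ [0, 1)`, so the improper integral there is `P(∞) - P(x)`.
-/

noncomputable def m0 (x : ℝ) : ℝ := (1 + x^2/2)^(-2 : ℤ)

open Real MeasureTheory Set Filter Topology

lemma m0_eq_div (y : ℝ) : m0 y = 4 / (2 + y ^ 2) ^ 2 := by
  rw [m0, zpow_neg, zpow_ofNat]
  field_simp
  ring

lemma continuous_m0 : Continuous m0 := by
  simp_rw [funext m0_eq_div]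
  exact continuous_const.div (by fun_prop) fun y => by positivity

lemma two_mul_le_log_sub_log {t : ℝ} (h0 : 0 ≤ t) (h1 : t < 1) :
    2 * t ≤ log (1 + t) - log (1 - t) := by
  have h := hasSum_log_sub_log_of_abs_lt_one (x := t) (by rwa [abs_of_nonneg h0])
  simpa using le_hasSum h 0 fun k _ => by positivity

lemma two_le_div_mul_log_abs {x y : ℝ} (hx : 0 < x) (hxy : x < y) :
    2 ≤ y / x * log |(x + y) / (x - y)| := by
  have hy : 0 < y := hx.trans hxy
  have ht := two_mul_le_log_sub_log (t := x / y) (by positivity) ((div_lt_one hy).2 hxy)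
  have habs : |(x + y) / (x - y)| = (1 + x / y) / (1 - x / y) := by
    rw [abs_div, abs_of_pos (by linarith), abs_of_neg (by linarith), neg_sub]
    have : y - x ≠ 0 := by linarith
    field_simp
    ring
  rw [habs, log_div (by positivity) (sub_pos.2 ((div_lt_one hy).2 hxy)).ne']
  calc 2 = y / x * (2 * (x / y)) := by field_simp
    _ ≤ _ := by gcongr

noncomputable def m0Integrand (x y : ℝ) : ℝ := m0 y * ((y / x) * log |(x + y) / (x - y)| - 2)

lemma m0Integrand_nonneg {x y : ℝ} (hx : 0 < x) (hxy : x < y) : 0 ≤ m0Integrand x y := by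
  rw [m0Integrand, m0_eq_div]
  exact mul_nonneg (by positivity) (sub_nonneg.2 (two_le_div_mul_log_abs hx hxy))

lemma intervalIntegrable_m0Integrand {x : ℝ} (hx : 0 < x) :
    IntervalIntegrable (m0Integrand x) volume 0 x := by
  have hlog : IntervalIntegrable (fun y => log (x - y)) volume 0 x := by
    simpa using (intervalIntegral.intervalIntegrable_log' (a := x) (b := 0)).comp_sub_left x
  have hcoef : Continuous fun y => m0 y * (y / x) := continuous_m0.mul (continuous_id.div_const x)
  have hlog_add : ContinuousOn (fun y => log (x + y)) (uIcc 0 x) := by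
    refine .log (by fun_prop) fun y hy => ?_
    rw [uIcc_of_le hx.le] at hy
    linarith [hy.1]
  have h : IntervalIntegrable
      (fun y => m0 y * (y / x) * log (x + y) - 2 * m0 y - log (x - y) * (m0 y * (y / x)))
      volume 0 x :=
    .sub (ContinuousOn.intervalIntegrable (.sub (hcoef.continuousOn.mul hlog_add)
      (continuous_const.mul continuous_m0).continuousOn)) (hlog.mul_continuousOn hcoef.continuousOn)
  rw [intervalIntegrable_iff_integrableOn_Ioo_of_le hx.le] at h ⊢
  refine h.congr_fun (fun y hy => ?_) measurableSet_Ioo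
  rw [m0Integrand, log_abs, log_div (by linarith [hy.1]) (by linarith [hy.2])]
  ring

noncomputable def m0Primitive (x y : ℝ) : ℝ :=
  2 * (x + y) / (x * (x ^ 2 + 2) * (2 + y ^ 2)) * ((y - x) * log (x + y) - (y - x) * log (y - x))
    - √2 * x ^ 2 / (x ^ 2 + 2) * arctan (y / √2) - 2 * y / (2 + y ^ 2)

lemma m0Primitive_zero (x : ℝ) : m0Primitive x 0 = 0 := by
  simp [m0Primitive, ← neg_sub x, log_neg_eq_log]

lemma continuousOn_m0Primitive {x : ℝ} (hx : 0 < x) : ContinuousOn (m0Primitive x) (Ici 0) := by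
  have hlog : ContinuousOn (fun y => (y - x) * log (x + y)) (Ici 0) :=
    (continuous_sub_right x).continuousOn.mul
      (.log (by fun_prop) fun y (hy : 0 ≤ y) => by positivity)
  have hmul_log : Continuous fun y => (y - x) * log (y - x) :=
    continuous_mul_log.comp (continuous_sub_right x)
  refine .sub (.sub (.mul ?_ (hlog.sub hmul_log.continuousOn)) (by fun_prop)) ?_
  · exact .div (by fun_prop) (by fun_prop) fun y _ => by positivity
  · exact .div (by fun_prop) (by fun_prop) fun y _ => by positivity

lemma hasDerivAt_m0Primitive {x y : ℝ} (hx : 0 < x) (hy : 0 < y) (hyx : y ≠ x) :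
    HasDerivAt (m0Primitive x) (m0Integrand x y) y := by
  have hxy : x + y ≠ 0 := by positivity
  have hyx' : y - x ≠ 0 := sub_ne_zero.2 hyx
  have hs : √2 ^ 2 = 2 := sq_sqrt zero_le_two
  have hden : x * (x ^ 2 + 2) * (2 + y ^ 2) ≠ 0 := by positivity
  have hq : HasDerivAt (fun y => 2 * (x + y) / (x * (x ^ 2 + 2) * (2 + y ^ 2)))
      ((2 * (x * (x ^ 2 + 2) * (2 + y ^ 2)) - 2 * (x + y) * (x * (x ^ 2 + 2) * (2 * y)))
        / (x * (x ^ 2 + 2) * (2 + y ^ 2)) ^ 2) y := by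
    refine .div ?_ ?_ hden
    · simpa using ((hasDerivAt_id y).const_add x).const_mul 2
    · simpa using ((hasDerivAt_pow 2 y).const_add 2).const_mul (x * (x ^ 2 + 2))
  have hlog : HasDerivAt (fun y => (y - x) * log (x + y)) (log (x + y) + (y - x) / (x + y)) y := by
    have := ((hasDerivAt_id y).sub_const x).mul ((hasDerivAt_log hxy).comp_const_add x y)
    exact this.congr_deriv (by simp; ring)
  have hmul_log : HasDerivAt (fun y => (y - x) * log (y - x)) (log (y - x) + 1) y :=
    (hasDerivAt_mul_log hyx').comp_sub_const y x
  have harctan :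
      HasDerivAt (fun y => arctan (y / √2)) (1 / (1 + (y / √2) ^ 2) * (1 / √2)) y := by
    simpa using ((hasDerivAt_id y).div_const √2).arctan
  have hrat : HasDerivAt (fun y => 2 * y / (2 + y ^ 2))
      ((2 * (2 + y ^ 2) - 2 * y * (2 * y)) / (2 + y ^ 2) ^ 2) y := by
    refine .div ?_ ?_ (by positivity)
    · simpa using (hasDerivAt_id y).const_mul 2
    · simpa using (hasDerivAt_pow 2 y).const_add 2
  refine (((hq.mul (hlog.sub hmul_log)).sub (harctan.const_mul _)).sub hrat).congr_deriv ?_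
  rw [m0Integrand, m0_eq_div, log_abs, log_div hxy (sub_ne_zero.2 hyx.symm), ← neg_sub y x,
    log_neg_eq_log]
  simp only [Pi.sub_apply]
  field_simp
  rw [hs]
  ring

lemma tendsto_m0Primitive_atTop {x : ℝ} (hx : 0 < x) :
    Tendsto (m0Primitive x) atTop (𝓝 (-(√2 * x ^ 2 / (x ^ 2 + 2)) * (π / 2))) := by
  -- in the variable `t = 1 / y` the non-arctan part is continuous at `t = 0`, where it vanishes
  set G : ℝ → ℝ := fun t =>
    2 * (1 + x * t) * (1 - x * t) / (x * (x ^ 2 + 2) * (2 * t ^ 2 + 1))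
      * log ((1 + x * t) / (1 - x * t)) - 2 * t / (2 * t ^ 2 + 1) with hG
  have hG0 : Tendsto G (𝓝 0) (𝓝 0) := by
    have : ContinuousAt G 0 := by fun_prop (disch := first | positivity | norm_num)
    simpa [hG] using this.tendsto
  have harctan : Tendsto (fun y => arctan (y / √2)) atTop (𝓝 (π / 2)) :=
    (tendsto_arctan_atTop.mono_right nhdsWithin_le_nhds).comp
      (tendsto_id.atTop_div_const (by positivity))
  have heq : (fun y => G y⁻¹ - √2 * x ^ 2 / (x ^ 2 + 2) * arctan (y / √2)) =ᶠ[atTop]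
      m0Primitive x := by
    filter_upwards [eventually_gt_atTop x] with y hxy
    have hy : y ≠ 0 := (hx.trans hxy).ne'
    have hyx : y - x ≠ 0 := sub_ne_zero.2 hxy.ne'
    have hratio : (1 + x * y⁻¹) / (1 - x * y⁻¹) = (x + y) / (y - x) := by
      field_simp
      ring
    simp only [hG]
    rw [hratio, log_div (by linarith) hyx, m0Primitive]
    field_simp
    ring
  simpa using ((hG0.comp tendsto_inv_atTop_zero).sub (harctan.const_mul _)).congr' heq

lemma integral_Ioi_m0Integrand {x : ℝ} (hx : 0 < x) :
    ∫ y in Ioi 0, m0Integrand x y = -(√2 * x ^ 2 / (x ^ 2 + 2)) * (π / 2) := by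
  have hcont := continuousOn_m0Primitive hx
  have hcont_x : ContinuousWithinAt (m0Primitive x) (Ici x) x :=
    (hcont x hx.le).mono (Ici_subset_Ici.2 hx.le)
  have hderiv (y : ℝ) (hy : y ∈ Ioi x) : HasDerivAt (m0Primitive x) (m0Integrand x y) y :=
    hasDerivAt_m0Primitive hx (hx.trans hy) hy.ne'
  have hnonneg (y : ℝ) (hy : y ∈ Ioi x) : 0 ≤ m0Integrand x y := m0Integrand_nonneg hx hy
  have hnear : ∫ y in Ioc 0 x, m0Integrand x y = m0Primitive x x - m0Primitive x 0 := by
    rw [← intervalIntegral.integral_of_le hx.le]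
    exact intervalIntegral.integral_eq_sub_of_hasDeriv_right_of_le hx.le
      (hcont.mono Icc_subset_Ici_self)
      (fun y hy => (hasDerivAt_m0Primitive hx hy.1 hy.2.ne).hasDerivWithinAt)
      (intervalIntegrable_m0Integrand hx)
  rw [← Ioc_union_Ioi_eq_Ioi hx.le, setIntegral_union (Ioc_disjoint_Ioi le_rfl) measurableSet_Ioi
      (intervalIntegrable_m0Integrand hx).1
      (integrableOn_Ioi_deriv_of_nonneg hcont_x hderiv hnonneg (tendsto_m0Primitive_atTop hx)),
    hnear,
    integral_Ioi_of_hasDerivAt_of_nonneg hcont_x hderiv hnonneg (tendsto_m0Primitive_atTop hx),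
    m0Primitive_zero]
  ring

theorem stmt_16 (x : ℝ) (hx : 0 < x) :
    (1/Real.pi) * ∫ y in Set.Ioi (0:ℝ),
        m0 y * ((y/x) * Real.log |(x+y)/(x-y)| - 2) =
      -(Real.sqrt 2/2) * x^2/(2 + x^2) := by
  change 1 / π * ∫ y in Ioi 0, m0Integrand x y = _
  rw [integral_Ioi_m0Integrand hx]
  field_simp
  ring
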